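/- Upper bound for the negative second Robin eigenvalue of the ball: let n ≥ 2, α < −1, and suppose y > 0 satisfies y·I_{n/2+1}(y)/I_{n/2}(y) = −(α+1) and −y² < (n/2+1)(α+1). Then −y² < −(α+1)² + n(α+1). -/
import Mathlib

set_option maxHeartbeats 1000000

/-- Modified Bessel function of the first kind. -/
noncomputable def besselI (ν x : ℝ) : ℝ :=
  ∑' k : ℕ, (x / 2) ^ (ν + 2 * (k : ℝ)) / (Nat.factorial k * Real.Gamma (ν + k + 1))

noncomputable def bterm (ν y : ℝ) (k : ℕ) : ℝ :=
  (y / 2) ^ (ν + 2 * (k : ℝ)) / (Nat.factorial k * Real.Gamma (ν + k + 1))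

lemma besselI_eq (ν y : ℝ) : besselI ν y = ∑' k, bterm ν y k := rfl

lemma bterm_pos {ν y : ℝ} (hν : 0 ≤ ν) (hy : 0 < y) (k : ℕ) : 0 < bterm ν y k := by
  have h1 : (0:ℝ) < y / 2 := by linarith
  have h2 : (0:ℝ) < ν + k + 1 := by positivity
  exact div_pos (Real.rpow_pos_of_pos h1 _)
    (mul_pos (by exact_mod_cast Nat.factorial_pos k) (Real.Gamma_pos_of_pos h2))

lemma gamma_fact {ν : ℝ} (hν : 0 ≤ ν) : ∀ k : ℕ,
    (Nat.factorial k : ℝ) * Real.Gamma (ν + 1) ≤ Real.Gamma (ν + k + 1) := by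
  intro k
  induction k with
  | zero => simp
  | succ k ih =>
    have hpos : (0:ℝ) < ν + k + 1 := by positivity
    have h1 : Real.Gamma (ν + ((k:ℕ)+1:ℕ) + 1) = (ν + k + 1) * Real.Gamma (ν + k + 1) := by
      rw [show ν + (((k:ℕ)+1:ℕ):ℝ) + 1 = (ν + k + 1) + 1 by push_cast; ring,
        Real.Gamma_add_one (ne_of_gt hpos)]
    rw [h1]
    have h2 : ((k:ℝ) + 1) * ((Nat.factorial k : ℝ) * Real.Gamma (ν + 1)) ≤
        (ν + k + 1) * Real.Gamma (ν + k + 1) := by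
      apply mul_le_mul (by linarith) (ih) ?_ (by positivity)
      positivity
    calc ((Nat.factorial (k+1) : ℝ)) * Real.Gamma (ν + 1)
        = ((k:ℝ)+1) * ((Nat.factorial k : ℝ) * Real.Gamma (ν + 1)) := by
          rw [Nat.factorial_succ]; push_cast; ring
      _ ≤ _ := h2

lemma bterm_summable {ν y : ℝ} (hν : 0 ≤ ν) (hy : 0 < y) : Summable (bterm ν y) := by
  have h1 : (0:ℝ) < y / 2 := by linarith
  have hΓ : (0:ℝ) < Real.Gamma (ν + 1) := Real.Gamma_pos_of_pos (by linarith)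
  have hle : ∀ k : ℕ, bterm ν y k ≤
      (y/2)^ν / Real.Gamma (ν+1) * (((y/2)^(2:ℝ))^k / Nat.factorial k) := by
    intro k
    have hfk : (0:ℝ) < Nat.factorial k := by exact_mod_cast Nat.factorial_pos k
    have hfk1 : (1:ℝ) ≤ Nat.factorial k := by exact_mod_cast (Nat.factorial_pos k)
    have hΓk : (0:ℝ) < Real.Gamma (ν + k + 1) := Real.Gamma_pos_of_pos (by positivity)
    have hb : (Nat.factorial k : ℝ) * Real.Gamma (ν + 1) ≤
        (Nat.factorial k : ℝ) * Real.Gamma (ν + k + 1) := by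
      calc (Nat.factorial k : ℝ) * Real.Gamma (ν + 1)
          ≤ 1 * Real.Gamma (ν + k + 1) := by rw [one_mul]; exact gamma_fact hν k
        _ ≤ (Nat.factorial k : ℝ) * Real.Gamma (ν + k + 1) :=
            mul_le_mul_of_nonneg_right hfk1 hΓk.le
    have hnum : (y/2) ^ (ν + 2*(k:ℝ)) = (y/2)^ν * ((y/2)^(2:ℝ))^k := by
      rw [← Real.rpow_natCast ((y/2)^(2:ℝ)) k, ← Real.rpow_mul h1.le, ← Real.rpow_add h1]
    have hr2 : (0:ℝ) < ((y/2)^(2:ℝ)) := Real.rpow_pos_of_pos h1 _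
    rw [bterm, hnum, div_mul_div_comm]
    apply div_le_div_of_nonneg_left (by positivity) (by positivity)
    calc Real.Gamma (ν+1) * (Nat.factorial k : ℝ) = (Nat.factorial k : ℝ) * Real.Gamma (ν+1) := by
          ring
      _ ≤ _ := hb
  exact Summable.of_nonneg_of_le (fun k => (bterm_pos hν hy k).le) hle
    ((Real.summable_pow_div_factorial ((y/2)^(2:ℝ))).mul_left _)

lemma besselI_pos {ν y : ℝ} (hν : 0 ≤ ν) (hy : 0 < y) : 0 < besselI ν y := by
  rw [besselI_eq]
  exact Summable.tsum_pos (bterm_summable hν hy) (fun k => (bterm_pos hν hy k).le) 0 (bterm_pos hν hy 0)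

lemma bterm_succ_eq {ν y : ℝ} (hν : 0 ≤ ν) (hy : 0 < y) (k : ℕ) :
    bterm ν y (k+1) = bterm (ν+2) y k + (2*(ν+1)/y) * bterm (ν+1) y (k+1) := by
  have h1 : (0:ℝ) < y / 2 := by linarith
  have hG2 : Real.Gamma (ν + ((k:ℕ)+1:ℕ) + 1) = Real.Gamma (ν + k + 2) := by
    norm_cast; push_cast; ring_nf
  have hGa : (0:ℝ) < ν + k + 2 := by positivity
  have hG3 : Real.Gamma (ν + k + 3) = (ν + k + 2) * Real.Gamma (ν + k + 2) := by
    rw [show ν + k + 3 = (ν + k + 2) + 1 by ring, Real.Gamma_add_one (ne_of_gt hGa)]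
  -- rewrite all three Gamma's
  have e1 : bterm ν y (k+1) = (y/2)^(ν + 2*(k:ℝ) + 2) / ((k+1) * Nat.factorial k *
      Real.Gamma (ν + k + 2)) := by
    rw [bterm, Nat.factorial_succ]
    push_cast
    ring_nf
  have e2 : bterm (ν+2) y k = (y/2)^(ν + 2*(k:ℝ) + 2) / (Nat.factorial k *
      ((ν + k + 2) * Real.Gamma (ν + k + 2))) := by
    rw [bterm, ← hG3, show ν + 2 + (k:ℝ) + 1 = ν + k + 3 by ring,
      show ν + 2 + 2*(k:ℝ) = ν + 2*(k:ℝ) + 2 by ring]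
  have e3 : bterm (ν+1) y (k+1) = (y/2)^(ν + 2*(k:ℝ) + 3) / ((k+1) * Nat.factorial k *
      ((ν + k + 2) * Real.Gamma (ν + k + 2))) := by
    rw [bterm, ← hG3, Nat.factorial_succ]
    push_cast
    ring_nf
  rw [e1, e2, e3]
  have hsplit : (y/2)^(ν + 2*(k:ℝ) + 3) = (y/2)^(ν + 2*(k:ℝ) + 2) * (y/2) := by
    rw [show ν + 2*(k:ℝ) + 3 = (ν + 2*(k:ℝ) + 2) + 1 by ring, Real.rpow_add h1, Real.rpow_one]
  rw [hsplit]
  have hfk : (0:ℝ) < Nat.factorial k := by exact_mod_cast Nat.factorial_pos k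
  have hΓk : (0:ℝ) < Real.Gamma (ν + k + 2) := Real.Gamma_pos_of_pos (by positivity)
  field_simp
  ring

lemma bterm_zero_eq {ν y : ℝ} (hν : 0 ≤ ν) (hy : 0 < y) :
    bterm ν y 0 = (2*(ν+1)/y) * bterm (ν+1) y 0 := by
  have h1 : (0:ℝ) < y / 2 := by linarith
  have hGa : (0:ℝ) < ν + 1 := by positivity
  have hG : Real.Gamma (ν + 1 + 1) = (ν + 1) * Real.Gamma (ν + 1) :=
    Real.Gamma_add_one (ne_of_gt hGa)
  have hΓ : (0:ℝ) < Real.Gamma (ν + 1) := Real.Gamma_pos_of_pos hGa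
  have hsplit : (y/2)^(ν + 1 + 2*((0:ℕ):ℝ)) = (y/2)^(ν + 2*((0:ℕ):ℝ)) * (y/2) := by
    rw [show ν + 1 + 2*((0:ℕ):ℝ) = (ν + 2*((0:ℕ):ℝ)) + 1 by push_cast; ring,
      Real.rpow_add h1, Real.rpow_one]
  rw [bterm, bterm, hsplit]
  push_cast
  rw [show ν + 1 + 0 + 1 = ν + 1 + 1 by ring, hG]
  field_simp
  ring

lemma besselI_rec {ν y : ℝ} (hν : 0 ≤ ν) (hy : 0 < y) :
    besselI ν y = besselI (ν+2) y + (2*(ν+1)/y) * besselI (ν+1) y := by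
  have s0 := bterm_summable hν hy
  have s1 := bterm_summable (by linarith : (0:ℝ) ≤ ν+1) hy
  have s2 := bterm_summable (by linarith : (0:ℝ) ≤ ν+2) hy
  have s1' : Summable (fun k => bterm (ν+1) y (k+1)) := (summable_nat_add_iff 1).2 s1
  rw [besselI_eq, besselI_eq, besselI_eq]
  rw [Summable.tsum_eq_zero_add s0, Summable.tsum_eq_zero_add s1]
  rw [bterm_zero_eq hν hy, mul_add]
  have : ∑' k, bterm ν y (k+1) = ∑' k, (bterm (ν+2) y k + (2*(ν+1)/y) * bterm (ν+1) y (k+1)) :=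
    tsum_congr (fun k => bterm_succ_eq hν hy k)
  rw [this, Summable.tsum_add s2 (s1'.mul_left _), tsum_mul_left]
  ring

noncomputable def aa (m j : ℕ) : ℝ :=
  if j ≤ m then 1/(Nat.factorial j * Nat.factorial (m-j)) else 0

noncomputable def DD (x : ℝ) (m j : ℕ) : ℝ :=
  1/(Real.Gamma (x + j) * Real.Gamma (x + (m + 2 - j : ℕ)))

lemma aa_nonneg (m j : ℕ) : 0 ≤ aa m j := by
  unfold aa; split
  · positivity
  · exact le_refl 0

lemma DD_pos {x : ℝ} (hx : 0 < x) (m j : ℕ) : 0 < DD x m j := by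
  unfold DD
  have h1 : (0:ℝ) < Real.Gamma (x + j) := Real.Gamma_pos_of_pos (by positivity)
  have h2 : (0:ℝ) < Real.Gamma (x + (m + 2 - j : ℕ)) := Real.Gamma_pos_of_pos (by positivity)
  positivity

lemma DD_sym {x : ℝ} (m j : ℕ) (hj : j ≤ m + 2) : DD x m (m + 2 - j) = DD x m j := by
  unfold DD
  rw [Nat.sub_sub_self hj, mul_comm]

lemma DD_mono {x : ℝ} (hx : 0 < x) (m j : ℕ) (hj : 2*j ≤ m + 1) :
    DD x m j ≤ DD x m (j+1) := by
  have hj1 : j ≤ m + 1 := by omega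
  have e1 : m + 2 - j = (m + 1 - j) + 1 := by omega
  have e2 : m + 2 - (j+1) = m + 1 - j := by omega
  have hc : ((m + 1 - j : ℕ) : ℝ) = (m:ℝ) + 1 - j := by
    push_cast [Nat.cast_sub hj1]; ring
  have hG1 : (0:ℝ) < Real.Gamma (x + j) := Real.Gamma_pos_of_pos (by positivity)
  have hG2 : (0:ℝ) < Real.Gamma (x + (m + 1 - j : ℕ)) := Real.Gamma_pos_of_pos (by positivity)
  unfold DD
  rw [e1, e2]
  have hA : Real.Gamma (x + (((m + 1 - j : ℕ) + 1 : ℕ))) =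
      (x + (m + 1 - j : ℕ)) * Real.Gamma (x + (m + 1 - j : ℕ)) := by
    rw [show (x + (((m + 1 - j : ℕ) + 1 : ℕ)) : ℝ) = (x + ((m + 1 - j : ℕ):ℝ)) + 1 by
      push_cast; ring]
    exact Real.Gamma_add_one (by positivity)
  have hB : Real.Gamma (x + ((j + 1 : ℕ))) = (x + j) * Real.Gamma (x + j) := by
    rw [show (x + ((j + 1 : ℕ)) : ℝ) = (x + (j:ℝ)) + 1 by push_cast; ring]
    exact Real.Gamma_add_one (by positivity)
  rw [hA, hB]
  apply one_div_le_one_div_of_le (by positivity)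
  have hle : (j:ℝ) ≤ ((m + 1 - j : ℕ) : ℝ) := by
    rw [hc]
    have : (2*j : ℕ) ≤ (m+1 : ℕ) := hj
    have := (Nat.cast_le (α := ℝ)).2 this
    push_cast at this
    linarith
  have hle' : x + (j:ℝ) ≤ x + ((m + 1 - j : ℕ) : ℝ) := by linarith
  have key : (x + (j:ℝ)) * (Real.Gamma (x + (j:ℝ)) * Real.Gamma (x + ((m + 1 - j : ℕ):ℝ))) ≤
      (x + ((m + 1 - j : ℕ):ℝ)) * (Real.Gamma (x + (j:ℝ)) * Real.Gamma (x + ((m + 1 - j : ℕ):ℝ))) :=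
    mul_le_mul_of_nonneg_right hle' (by positivity)
  push_cast at key ⊢
  nlinarith [key]

lemma aa_sub_one (m j : ℕ) (hj : 2*j ≤ m+1) (hj1 : j ≤ m+1) : aa m (m+1-j) ≤ aa m j := by
  rcases Nat.eq_zero_or_pos j with h0 | h1
  · subst h0
    simp only [Nat.sub_zero, aa]
    rw [if_neg (by omega)]
    split
    · positivity
    · exact le_refl 0
  · have hjm : j ≤ m := by omega
    have hjm' : m+1-j ≤ m := by omega
    have e1 : m - (m+1-j) = j - 1 := by omega
    unfold aa
    rw [if_pos hjm, if_pos hjm', e1]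
    have hnat : Nat.factorial j * Nat.factorial (m-j) ≤
        Nat.factorial (m+1-j) * Nat.factorial (j-1) := by
      have ej : j = (j-1)+1 := by omega
      have em : m+1-j = (m-j)+1 := by omega
      calc Nat.factorial j * Nat.factorial (m-j)
          = j * (Nat.factorial (j-1) * Nat.factorial (m-j)) := by
            rw [ej, Nat.factorial_succ, ← ej]; ring
        _ ≤ (m+1-j) * (Nat.factorial (j-1) * Nat.factorial (m-j)) := by
            apply Nat.mul_le_mul_right
            omega
        _ = Nat.factorial (m+1-j) * Nat.factorial (j-1) := by
            rw [em, Nat.factorial_succ, ← em]; ring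
    apply one_div_le_one_div_of_le
    · positivity
    · exact_mod_cast hnat

lemma sum_DD_le {x : ℝ} (hx : 0 < x) (m : ℕ) :
    ∑ k ∈ Finset.range (m+1), aa m k * DD x m k ≤
      ∑ k ∈ Finset.range (m+1), aa m k * DD x m (k+1) := by
  have hΔrefl : ∀ j, j ≤ m+1 →
      DD x m ((m+1-j)+1) - DD x m (m+1-j) = -(DD x m (j+1) - DD x m j) := by
    intro j hj
    have e1 : (m+1-j)+1 = m+2-j := by omega
    have e2 : m+1-j = m+2-(j+1) := by omega
    rw [e1, e2, DD_sym m j (by omega), DD_sym m (j+1) (by omega)]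
    ring
  set f : ℕ → ℝ := fun j => aa m j * (DD x m (j+1) - DD x m j) with hf
  have hterm : ∀ j, j ≤ m+1 → 0 ≤ (aa m j - aa m (m+1-j)) * (DD x m (j+1) - DD x m j) := by
    intro j hj
    rcases le_or_gt (2*j) (m+1) with hc | hc
    · exact mul_nonneg (by linarith [aa_sub_one m j hc hj]) (by linarith [DD_mono hx m j hc])
    · set j' := m+1-j with hj'
      have hc' : 2*j' ≤ m+1 := by omega
      have hjj : m+1-j' = j := by omega
      have h1 : aa m j - aa m (m+1-j) ≤ 0 := by
        have := aa_sub_one m j' hc' (by omega)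
        rw [hjj] at this
        linarith
      have h2 : DD x m (j+1) - DD x m j ≤ 0 := by
        have := hΔrefl j' (by omega)
        rw [hjj] at this
        linarith [DD_mono hx m j' hc']
      nlinarith [mul_nonneg (neg_nonneg.2 h1) (neg_nonneg.2 h2)]
  have hrefl : ∑ j ∈ Finset.range (m+2), f (m+1-j) = ∑ j ∈ Finset.range (m+2), f j := by
    have := Finset.sum_range_reflect f (m+2)
    simpa using this
  have hS2 : ∑ j ∈ Finset.range (m+2), f (m+1-j) =
      ∑ j ∈ Finset.range (m+2), (-(aa m (m+1-j)) * (DD x m (j+1) - DD x m j)) := by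
    apply Finset.sum_congr rfl
    intro j hjr
    have hj : j ≤ m+1 := by
      have := Finset.mem_range.1 hjr; omega
    rw [hf]
    simp only
    rw [hΔrefl j hj]
    ring
  have hSnn : 0 ≤ ∑ j ∈ Finset.range (m+2), f j := by
    have h2S : 2 * ∑ j ∈ Finset.range (m+2), f j =
        ∑ j ∈ Finset.range (m+2), (aa m j - aa m (m+1-j)) * (DD x m (j+1) - DD x m j) := by
      rw [two_mul]
      nth_rewrite 1 [← hrefl]
      rw [hS2, ← Finset.sum_add_distrib]
      apply Finset.sum_congr rfl
      intro j _
      rw [hf]; ring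
    have hpos : 0 ≤ ∑ j ∈ Finset.range (m+2),
        (aa m j - aa m (m+1-j)) * (DD x m (j+1) - DD x m j) :=
      Finset.sum_nonneg (fun j hjr => hterm j (by have := Finset.mem_range.1 hjr; omega))
    linarith
  have hsplit : ∑ j ∈ Finset.range (m+2), f j = ∑ j ∈ Finset.range (m+1), f j := by
    rw [Finset.sum_range_succ]
    have : f (m+1) = 0 := by
      rw [hf]
      simp only
      rw [aa, if_neg (by omega)]
      ring
    rw [this, add_zero]
  rw [hsplit] at hSnn
  have : ∑ k ∈ Finset.range (m+1), aa m k * DD x m (k+1) -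
      ∑ k ∈ Finset.range (m+1), aa m k * DD x m k = ∑ j ∈ Finset.range (m+1), f j := by
    rw [← Finset.sum_sub_distrib]
    apply Finset.sum_congr rfl
    intro j _
    rw [hf]; ring
  linarith

lemma uw_eq {ν y : ℝ} (hν : 0 ≤ ν) (hy : 0 < y) (m k : ℕ) (hk : k ≤ m) :
    bterm ν y k * bterm (ν+2) y (m-k) =
      (y/2)^(2*ν + 2*(m:ℝ) + 2) * (aa m k * DD (ν+1) m k) := by
  have hp : (0:ℝ) < y/2 := by linarith
  have c1 : ((m-k:ℕ):ℝ) = (m:ℝ)-k := by rw [Nat.cast_sub hk]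
  have c2 : ((m+2-k:ℕ):ℝ) = (m:ℝ)+2-k := by rw [Nat.cast_sub (by omega)]; push_cast; ring
  have hf1 : ((Nat.factorial k:ℕ):ℝ) ≠ 0 := by exact_mod_cast (Nat.factorial_pos k).ne'
  have hf2 : ((Nat.factorial (m-k):ℕ):ℝ) ≠ 0 := by exact_mod_cast (Nat.factorial_pos (m-k)).ne'
  have hG1 : Real.Gamma (ν + (k:ℝ) + 1) ≠ 0 := (Real.Gamma_pos_of_pos (by positivity)).ne'
  have hG2 : Real.Gamma (ν + 2 + ((m:ℝ)-k) + 1) ≠ 0 := by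
    apply (Real.Gamma_pos_of_pos ?_).ne'
    have : (k:ℝ) ≤ m := by exact_mod_cast hk
    linarith
  rw [bterm, bterm, aa, DD, if_pos hk, c1, c2]
  rw [div_mul_div_comm, ← Real.rpow_add hp]
  rw [show (ν + 2*(k:ℝ)) + (ν + 2 + 2*((m:ℝ)-k)) = 2*ν + 2*(m:ℝ) + 2 by ring]
  rw [show ν + 1 + (k:ℝ) = ν + (k:ℝ) + 1 by ring]
  rw [show ν + 1 + ((m:ℝ)+2-k) = ν + 2 + ((m:ℝ)-k) + 1 by ring]
  field_simp
  try exact Or.inl trivial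

lemma vv_eq {ν y : ℝ} (hν : 0 ≤ ν) (hy : 0 < y) (m k : ℕ) (hk : k ≤ m) :
    bterm (ν+1) y k * bterm (ν+1) y (m-k) =
      (y/2)^(2*ν + 2*(m:ℝ) + 2) * (aa m k * DD (ν+1) m (k+1)) := by
  have hp : (0:ℝ) < y/2 := by linarith
  have c1 : ((m-k:ℕ):ℝ) = (m:ℝ)-k := by rw [Nat.cast_sub hk]
  have c2 : ((m+2-(k+1):ℕ):ℝ) = (m:ℝ)+1-k := by rw [Nat.cast_sub (by omega)]; push_cast; ring
  have c3 : ((k+1:ℕ):ℝ) = (k:ℝ)+1 := by push_cast; ring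
  have hf1 : ((Nat.factorial k:ℕ):ℝ) ≠ 0 := by exact_mod_cast (Nat.factorial_pos k).ne'
  have hf2 : ((Nat.factorial (m-k):ℕ):ℝ) ≠ 0 := by exact_mod_cast (Nat.factorial_pos (m-k)).ne'
  have hG1 : Real.Gamma (ν + 1 + (k:ℝ) + 1) ≠ 0 := (Real.Gamma_pos_of_pos (by positivity)).ne'
  have hG2 : Real.Gamma (ν + 1 + ((m:ℝ)-k) + 1) ≠ 0 := by
    apply (Real.Gamma_pos_of_pos ?_).ne'
    have : (k:ℝ) ≤ m := by exact_mod_cast hk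
    linarith
  rw [bterm, bterm, aa, DD, if_pos hk, c1, c2, c3]
  rw [div_mul_div_comm, ← Real.rpow_add hp]
  rw [show (ν + 1 + 2*(k:ℝ)) + (ν + 1 + 2*((m:ℝ)-k)) = 2*ν + 2*(m:ℝ) + 2 by ring]
  rw [show ν + 1 + ((k:ℝ)+1) = ν + 1 + (k:ℝ) + 1 by ring]
  rw [show ν + 1 + ((m:ℝ)+1-k) = ν + 1 + ((m:ℝ)-k) + 1 by ring]
  field_simp
  try exact Or.inl trivial

lemma besselI_turan {ν y : ℝ} (hν : 0 ≤ ν) (hy : 0 < y) :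
    besselI ν y * besselI (ν+2) y ≤ besselI (ν+1) y ^ 2 := by
  have s0 := bterm_summable hν hy
  have s1 := bterm_summable (by linarith : (0:ℝ) ≤ ν+1) hy
  have s2 := bterm_summable (by linarith : (0:ℝ) ≤ ν+2) hy
  have n0 : Summable (fun k => ‖bterm ν y k‖) := by
    simpa only [Real.norm_eq_abs, abs_of_pos (bterm_pos hν hy _)] using s0
  have n1 : Summable (fun k => ‖bterm (ν+1) y k‖) := by
    simpa only [Real.norm_eq_abs, abs_of_pos (bterm_pos (by linarith : (0:ℝ) ≤ ν+1) hy _)] using s1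
  have n2 : Summable (fun k => ‖bterm (ν+2) y k‖) := by
    simpa only [Real.norm_eq_abs, abs_of_pos (bterm_pos (by linarith : (0:ℝ) ≤ ν+2) hy _)] using s2
  rw [besselI_eq, besselI_eq, besselI_eq, sq]
  rw [tsum_mul_tsum_eq_tsum_sum_range_of_summable_norm n0 n2,
    tsum_mul_tsum_eq_tsum_sum_range_of_summable_norm n1 n1]
  apply Summable.tsum_le_tsum ?_
    ((summable_norm_sum_mul_range_of_summable_norm n0 n2).of_norm)
    ((summable_norm_sum_mul_range_of_summable_norm n1 n1).of_norm)
  intro m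
  have hP : (0:ℝ) ≤ (y/2)^(2*ν + 2*(m:ℝ) + 2) := (Real.rpow_pos_of_pos (by linarith) _).le
  calc ∑ k ∈ Finset.range (m+1), bterm ν y k * bterm (ν+2) y (m-k)
      = (y/2)^(2*ν + 2*(m:ℝ) + 2) * ∑ k ∈ Finset.range (m+1), aa m k * DD (ν+1) m k := by
        rw [Finset.mul_sum]
        exact Finset.sum_congr rfl (fun k hkr =>
          uw_eq hν hy m k (by have := Finset.mem_range.1 hkr; omega))
    _ ≤ (y/2)^(2*ν + 2*(m:ℝ) + 2) * ∑ k ∈ Finset.range (m+1), aa m k * DD (ν+1) m (k+1) :=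
        mul_le_mul_of_nonneg_left (sum_DD_le (by linarith : (0:ℝ) < ν+1) m) hP
    _ = ∑ k ∈ Finset.range (m+1), bterm (ν+1) y k * bterm (ν+1) y (m-k) := by
        rw [Finset.mul_sum]
        exact (Finset.sum_congr rfl (fun k hkr =>
          vv_eq hν hy m k (by have := Finset.mem_range.1 hkr; omega))).symm

theorem second_robin_eigenvalue_upper_bound (n : ℕ) (hn : 2 ≤ n) (α : ℝ) (hα : α < -1)
    (y : ℝ) (hy : 0 < y)
    (heq : y * besselI ((n : ℝ) / 2 + 1) y / besselI ((n : ℝ) / 2) y = -(α + 1))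
    (hpre : -y ^ 2 < ((n : ℝ) / 2 + 1) * (α + 1)) :
    -y ^ 2 < -(α + 1) ^ 2 + n * (α + 1) := by
  set ν : ℝ := (n : ℝ) / 2 with hνdef
  have hν : (1:ℝ) ≤ ν := by
    rw [hνdef]
    have : (2:ℝ) ≤ n := by exact_mod_cast hn
    linarith
  have hν0 : (0:ℝ) ≤ ν := by linarith
  set I0 := besselI ν y with hI0def
  set I1 := besselI (ν+1) y with hI1def
  set I2 := besselI (ν+2) y with hI2def
  set I3 := besselI (ν+3) y with hI3def
  have pos0 : 0 < I0 := besselI_pos hν0 hy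
  have pos1 : 0 < I1 := besselI_pos (by linarith) hy
  have pos2 : 0 < I2 := besselI_pos (by linarith) hy
  have pos3 : 0 < I3 := besselI_pos (by linarith) hy
  have rec1 : I0 = I2 + 2*(ν+1)/y * I1 := besselI_rec hν0 hy
  have rec2 : I1 = I3 + 2*(ν+2)/y * I2 := by
    have h := besselI_rec (by linarith : (0:ℝ) ≤ ν+1) hy
    rw [show ν+1+2 = ν+3 by ring, show ν+1+1 = ν+2 by ring] at h
    exact h
  have turan : I1 * I3 ≤ I2^2 := by
    have h := besselI_turan (by linarith : (0:ℝ) ≤ ν+1) hy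
    rw [show ν+1+2 = ν+3 by ring, show ν+1+1 = ν+2 by ring] at h
    exact h
  set A : ℝ := -(α+1) with hAdef
  have hA : 0 < A := by rw [hAdef]; linarith
  have hA0 : y * I1 = A * I0 := by
    rw [← heq]
    field_simp
  set q : ℝ := y * I2 / I1 with hqdef
  have hq : 0 < q := by positivity
  have hqI : q * I1 = y * I2 := by
    rw [hqdef]; field_simp
  have hyI3 : y * I3 = y * I1 - 2*(ν+2)*I2 := by
    rw [rec2]; field_simp; ring
  have rec1y : y * I0 = y * I2 + 2*(ν+1)*I1 := by
    rw [rec1]; field_simp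
  -- (∗) y^2 ≤ q^2 + 2*(ν+2)*q
  have h3y : y^2*(I1*I3) ≤ y^2*I2^2 := mul_le_mul_of_nonneg_left turan (by positivity)
  have e2 : (q*I1)^2 = (y*I2)^2 := by rw [hqI]
  have e3 : q*I1*I1 = y*I2*I1 := by rw [hqI]
  have e4 : (2*(ν+2))*(q*I1*I1) = (2*(ν+2))*(y*I2*I1) := by rw [e3]
  have e6 : (y*I1)*(y*I3) = (y*I1)*(y*I1 - 2*(ν+2)*I2) := by rw [hyI3]
  have key : y^2*I1^2 ≤ (q^2 + 2*(ν+2)*q)*I1^2 := by linarith [h3y, e2, e4, e6]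
  have hstar : y^2 ≤ q^2 + 2*(ν+2)*q := by
    have hI1sq : (0:ℝ) < I1^2 := by positivity
    exact le_of_mul_le_mul_right key hI1sq
  -- (∗∗) y^2 = A*q + (2ν+2)*A
  have hss : y^2 = A*q + (2*ν+2)*A := by
    have h : y^2*I1 = (A*q + (2*ν+2)*A)*I1 := by
      calc y^2*I1 = y*(y*I1) := by ring
        _ = y*(A*I0) := by rw [hA0]
        _ = A*(y*I0) := by ring
        _ = A*(y*I2 + 2*(ν+1)*I1) := by rw [rec1y]
        _ = A*(q*I1) + (2*ν+2)*A*I1 := by rw [hqI]; ring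
        _ = (A*q + (2*ν+2)*A)*I1 := by ring
    exact mul_right_cancel₀ pos1.ne' h
  -- conclude y^2 > A^2 + 2νA
  have hn2 : (n:ℝ) = 2*ν := by rw [hνdef]; ring
  have goal : A^2 + 2*ν*A < y^2 := by
    rcases lt_or_ge A (q+2) with hc | hc
    · have : 0 < A*(q+2-A) := mul_pos hA (by linarith)
      linarith [hss, this]
    · exfalso
      have p1 : 0 ≤ (A-(q+2))*q := mul_nonneg (by linarith) hq.le
      have p2 : 0 ≤ (A-(q+2))*(2*ν+2) := mul_nonneg (by linarith) (by linarith)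
      linarith [hstar, hss, p1, p2, hν]
  rw [hn2]
  have : -(α+1)^2 + 2*ν*(α+1) = -(A^2 + 2*ν*A) := by rw [hAdef]; ring
  rw [this]
  linarith
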